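/- Let Z be uniformly distributed on {1,…,T} independent of all other random variables, let X_0^T be i.i.d., and suppose that for each t, X_{2,t} is a (deterministic) function of (X_0^{t−1}, Y^{t−1}), X_{1,t} is a function of X_0^T, and Y_t satisfies the Markov chain (Z, X_0^{Z−1}, X_{0,Z+1}^T, Y^{Z−1}) − (X_{0,Z}, X_{1,Z}, X_{2,Z}) − Y_Z induced by a memoryless channel Γ(y|x_0,x_1,x_2). Then I(X_{0,Z}; X_{2,Z}) ≤ I(X_{1,Z}; Y_Z | X_{0,Z}, X_{2,Z}). -/

import Mathlib

/-!
Write `X₀'`, `X₁'`, `X₂'`, `Y'` for the stage-`Z` variables. As `X₀'` is independent of `Z` and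
`X₂'` is a function of `Z` and of the past `(X₀^{Z-1}, Y^{Z-1})`,
`I(X₀'; X₂') ≤ I(X₀'; X₀^{Z-1}, Y^{Z-1} | Z) = (1/T) ∑ₜ I(X₀ₜ; Y^{t-1} | X₀^{t-1})`,
the last step because `X₀ₜ` is independent of `X₀^{t-1}`. Csiszár's sum identity turns the sum
into `∑ₜ I(X₀_{t+1}^T; Yₜ | Y^{t-1}, X₀^t)`, and each term is at most `I(X₁ₜ; Yₜ | X₀ₜ, X₂ₜ)`:
given its inputs `(X₀ₜ, X₁ₜ, X₂ₜ)` the channel output `Yₜ` is independent of the rest of the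
history. Averaging over `t` gives `I(X₁'; Y' | X₀', X₂', Z)`, and `Z` can be dropped from the
conditioning for the same reason.
-/

open Finset

/-- Probability that the random variable `X` on the finite probability space
`(Ω, μ)` takes the value `x`. -/
noncomputable def pr {Ω α : Type*} [Fintype Ω] [DecidableEq α]
    (μ : Ω → ℝ) (X : Ω → α) (x : α) : ℝ :=
  ∑ ω, if X ω = x then μ ω else 0

/-- Shannon entropy of the random variable `X` under `μ`. -/
noncomputable def Hent {Ω α : Type*} [Fintype Ω] [Fintype α] [DecidableEq α]
    (μ : Ω → ℝ) (X : Ω → α) : ℝ :=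
  -∑ x, pr μ X x * Real.log (pr μ X x)

/-- Conditional entropy `H(X | Y)` under `μ`. -/
noncomputable def condH {Ω α β : Type*} [Fintype Ω] [Fintype α] [DecidableEq α]
    [Fintype β] [DecidableEq β] (μ : Ω → ℝ) (X : Ω → α) (Y : Ω → β) : ℝ :=
  Hent μ (fun ω => (X ω, Y ω)) - Hent μ Y

/-- Mutual information `I(X; Y)` under `μ`. -/
noncomputable def MI {Ω α β : Type*} [Fintype Ω] [Fintype α] [DecidableEq α]
    [Fintype β] [DecidableEq β] (μ : Ω → ℝ) (X : Ω → α) (Y : Ω → β) : ℝ :=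
  Hent μ X + Hent μ Y - Hent μ (fun ω => (X ω, Y ω))

/-- Conditional mutual information `I(X; Y | Z)` under `μ`. -/
noncomputable def condMI {Ω α β γ : Type*} [Fintype Ω] [Fintype α] [DecidableEq α]
    [Fintype β] [DecidableEq β] [Fintype γ] [DecidableEq γ]
    (μ : Ω → ℝ) (X : Ω → α) (Y : Ω → β) (Z : Ω → γ) : ℝ :=
  condH μ X Z + condH μ Y Z - condH μ (fun ω => (X ω, Y ω)) Z

/-- The indices strictly before `t`, as a map `Fin t.val → Fin T`. -/
def preIdx {T : ℕ} (t : Fin T) (s : Fin t.val) : Fin T :=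
  Fin.castLE t.isLt.le s


section Probability

variable {Ω α α' : Type*} [Fintype Ω] [DecidableEq α] [DecidableEq α'] {μ : Ω → ℝ}

theorem pr_congr {X : Ω → α} {X' : Ω → α'} {x : α} {x' : α'}
    (h : ∀ ω, X ω = x ↔ X' ω = x') : pr μ X x = pr μ X' x' :=
  sum_congr rfl fun ω _ => if_congr (h ω) rfl rfl

theorem pr_nonneg (h0 : ∀ ω, 0 ≤ μ ω) (X : Ω → α) (x : α) : 0 ≤ pr μ X x :=
  sum_nonneg fun ω _ => ite_nonneg (h0 ω) le_rfl

theorem pr_apply_pos (h0 : ∀ ω, 0 ≤ μ ω) (X : Ω → α) {ω : Ω} (hω : 0 < μ ω) :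
    0 < pr μ X (X ω) := by
  refine hω.trans_le ?_
  unfold pr
  simpa using single_le_sum (f := fun ω' => if X ω' = X ω then μ ω' else 0)
    (fun ω' _ => ite_nonneg (h0 ω') le_rfl) (mem_univ ω)

theorem sum_mul_comp_eq_sum_pr [Fintype α] (X : Ω → α) (f : α → ℝ) :
    ∑ ω, μ ω * f (X ω) = ∑ x, pr μ X x * f x := by
  simp only [pr, sum_mul, ite_mul, zero_mul]
  rw [sum_comm]
  simp

theorem sum_pr [Fintype α] (X : Ω → α) : ∑ x, pr μ X x = ∑ ω, μ ω := by
  simpa using (sum_mul_comp_eq_sum_pr (μ := μ) X fun _ => 1).symm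

theorem sum_pr_pair_left [Fintype α] (X : Ω → α) (Z : Ω → α') (z : α') :
    ∑ x, pr μ (fun ω => (X ω, Z ω)) (x, z) = pr μ Z z := by
  simp only [pr, Prod.mk.injEq]
  rw [sum_comm]
  refine sum_congr rfl fun ω _ => ?_
  by_cases h : Z ω = z <;> simp [h]

/-- Tested only on the atoms `((X ω, Y ω), Z ω)`, which is all that `condMI` sees. -/
def CondIndep {β γ : Type*} [DecidableEq β] [DecidableEq γ] (μ : Ω → ℝ) (X : Ω → α) (Y : Ω → β)
    (Z : Ω → γ) : Prop :=
  ∀ ω, pr μ (fun ω => ((X ω, Y ω), Z ω)) ((X ω, Y ω), Z ω) * pr μ Z (Z ω)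
    = pr μ (fun ω => (X ω, Z ω)) (X ω, Z ω) * pr μ (fun ω => (Y ω, Z ω)) (Y ω, Z ω)

end Probability

section InformationMeasures

variable {Ω α β γ δ : Type*} [Fintype Ω]
  [Fintype α] [DecidableEq α] [Fintype β] [DecidableEq β]
  [Fintype γ] [DecidableEq γ] [Fintype δ] [DecidableEq δ] {μ : Ω → ℝ}

theorem Hent_eq_sum (X : Ω → α) : Hent μ X = -∑ ω, μ ω * Real.log (pr μ X (X ω)) := by
  rw [Hent, sum_mul_comp_eq_sum_pr X fun x => Real.log (pr μ X x)]

theorem Hent_congr {X : Ω → α} {X' : Ω → β} (h : ∀ ω ω', X ω = X ω' ↔ X' ω = X' ω') :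
    Hent μ X = Hent μ X' := by
  simp only [Hent_eq_sum, pr_congr fun ω' => h ω' _]

theorem Hent_const_unit (h1 : ∑ ω, μ ω = 1) : Hent μ (fun _ => ()) = 0 := by
  simp [Hent, pr, h1]

theorem condMI_eq_Hent (X : Ω → α) (Y : Ω → β) (Z : Ω → γ) :
    condMI μ X Y Z = Hent μ (fun ω => (X ω, Z ω)) + Hent μ (fun ω => (Y ω, Z ω))
      - Hent μ (fun ω => ((X ω, Y ω), Z ω)) - Hent μ Z := by
  unfold condMI condH
  ring

theorem condMI_eq_sum_log (X : Ω → α) (Y : Ω → β) (Z : Ω → γ) :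
    condMI μ X Y Z = ∑ ω, μ ω *
      (Real.log (pr μ (fun ω => ((X ω, Y ω), Z ω)) ((X ω, Y ω), Z ω)) + Real.log (pr μ Z (Z ω))
        - Real.log (pr μ (fun ω => (X ω, Z ω)) (X ω, Z ω))
        - Real.log (pr μ (fun ω => (Y ω, Z ω)) (Y ω, Z ω))) := by
  simp only [condMI_eq_Hent, Hent_eq_sum, mul_add, mul_sub, sum_add_distrib, sum_sub_distrib]
  ring

theorem condMI_congr {α' β' γ' : Type*} [Fintype α'] [DecidableEq α'] [Fintype β']
    [DecidableEq β'] [Fintype γ'] [DecidableEq γ'] {X : Ω → α} {Y : Ω → β} {Z : Ω → γ}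
    {X' : Ω → α'} {Y' : Ω → β'} {Z' : Ω → γ'}
    (hX : ∀ ω ω', X ω = X ω' ↔ X' ω = X' ω') (hY : ∀ ω ω', Y ω = Y ω' ↔ Y' ω = Y' ω')
    (hZ : ∀ ω ω', Z ω = Z ω' ↔ Z' ω = Z' ω') :
    condMI μ X Y Z = condMI μ X' Y' Z' := by
  simp only [condMI_eq_Hent]
  rw [Hent_congr (X := fun ω => (X ω, Z ω)) (X' := fun ω => (X' ω, Z' ω))
      fun ω ω' => by simp only [Prod.mk.injEq, hX, hZ],
    Hent_congr (X := fun ω => (Y ω, Z ω)) (X' := fun ω => (Y' ω, Z' ω))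
      fun ω ω' => by simp only [Prod.mk.injEq, hY, hZ],
    Hent_congr (X := fun ω => ((X ω, Y ω), Z ω)) (X' := fun ω => ((X' ω, Y' ω), Z' ω))
      fun ω ω' => by simp only [Prod.mk.injEq, hX, hY, hZ],
    Hent_congr hZ]

theorem condMI_comm (X : Ω → α) (Y : Ω → β) (Z : Ω → γ) :
    condMI μ X Y Z = condMI μ Y X Z := by
  simp only [condMI_eq_Hent]
  rw [Hent_congr (X := fun ω => ((X ω, Y ω), Z ω)) (X' := fun ω => ((Y ω, X ω), Z ω))
    fun ω ω' => by simp only [Prod.mk.injEq]; tauto]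
  ring

theorem condMI_pair_left (X : Ω → α) (U : Ω → δ) (Y : Ω → β) (W : Ω → γ) :
    condMI μ (fun ω => (X ω, U ω)) Y W
      = condMI μ X Y W + condMI μ U Y (fun ω => (X ω, W ω)) := by
  simp only [condMI_eq_Hent]
  rw [Hent_congr (X := fun ω => ((X ω, U ω), W ω)) (X' := fun ω => (U ω, X ω, W ω))
      fun ω ω' => by simp only [Prod.mk.injEq]; tauto,
    Hent_congr (X := fun ω => (((X ω, U ω), Y ω), W ω)) (X' := fun ω => ((U ω, Y ω), X ω, W ω))
      fun ω ω' => by simp only [Prod.mk.injEq]; tauto,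
    Hent_congr (X := fun ω => ((X ω, Y ω), W ω)) (X' := fun ω => (Y ω, X ω, W ω))
      fun ω ω' => by simp only [Prod.mk.injEq]; tauto]
  ring

theorem condMI_pair_right (X : Ω → α) (Y : Ω → β) (V : Ω → δ) (W : Ω → γ) :
    condMI μ X (fun ω => (Y ω, V ω)) W
      = condMI μ X Y W + condMI μ X V (fun ω => (Y ω, W ω)) := by
  rw [condMI_comm, condMI_pair_left, condMI_comm (μ := μ) Y, condMI_comm (μ := μ) V]

theorem MI_eq_condMI_unit (h1 : ∑ ω, μ ω = 1) (X : Ω → α) (Y : Ω → β) :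
    MI μ X Y = condMI μ X Y (fun _ => ()) := by
  rw [MI, condMI_eq_Hent, Hent_const_unit h1,
    Hent_congr (X := fun ω => (X ω, ())) (X' := X) fun ω ω' => by simp,
    Hent_congr (X := fun ω => (Y ω, ())) (X' := Y) fun ω ω' => by simp,
    Hent_congr (X := fun ω => ((X ω, Y ω), ())) (X' := fun ω => (X ω, Y ω)) fun ω ω' => by simp]
  ring

theorem condMI_eq_zero_of_determined {X : Ω → α} (Y : Ω → β) {Z : Ω → γ}
    (h : ∀ ω ω', Z ω = Z ω' → X ω = X ω') : condMI μ X Y Z = 0 := by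
  rw [condMI_eq_Hent,
    Hent_congr (X := fun ω => (X ω, Z ω)) (X' := Z) fun ω ω' => by
      simp only [Prod.mk.injEq]; exact and_iff_right_of_imp (h ω ω'),
    Hent_congr (X := fun ω => ((X ω, Y ω), Z ω)) (X' := fun ω => (Y ω, Z ω)) fun ω ω' => by
      simp only [Prod.mk.injEq]; grind]
  ring

theorem one_sub_mul_div_mul_le_log {p q r s : ℝ} (hp : 0 < p) (hq : 0 < q) (hr : 0 < r)
    (hs : 0 < s) : 1 - r * s / (p * q) ≤ Real.log p + Real.log q - Real.log r - Real.log s := by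
  have := Real.one_sub_inv_le_log_of_pos (div_pos (mul_pos hp hq) (mul_pos hr hs))
  rwa [inv_div, Real.log_div (by positivity) (by positivity), Real.log_mul hp.ne' hq.ne',
    Real.log_mul hr.ne' hs.ne', ← sub_sub] at this

theorem sum_mul_div_pr_le (V : Ω → α) {g : α → ℝ} (hg : ∀ v, 0 ≤ g v) :
    ∑ ω, μ ω * (g (V ω) / pr μ V (V ω)) ≤ ∑ v, g v := by
  refine (sum_mul_comp_eq_sum_pr V fun v => g v / pr μ V v).trans_le (sum_le_sum fun v _ => ?_)
  rcases eq_or_ne (pr μ V v) 0 with h | h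
  · simp [h, hg]
  · rw [mul_div_cancel₀ _ h]

theorem sum_pr_mul_pr_div_pr (X : Ω → α) (Y : Ω → β) (Z : Ω → γ) :
    ∑ v : (α × β) × γ, pr μ (fun ω => (X ω, Z ω)) (v.1.1, v.2)
      * pr μ (fun ω => (Y ω, Z ω)) (v.1.2, v.2) / pr μ Z v.2 = ∑ ω, μ ω := by
  rw [Fintype.sum_prod_type, sum_comm]
  simp only [Fintype.sum_prod_type, ← sum_div, ← sum_mul_sum, sum_pr_pair_left, mul_self_div_self,
    sum_pr]

/-- Gibbs' inequality, through `log u ≥ 1 - 1/u`. -/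
theorem condMI_nonneg (h0 : ∀ ω, 0 ≤ μ ω) (X : Ω → α) (Y : Ω → β) (Z : Ω → γ) :
    0 ≤ condMI μ X Y Z := by
  set V : Ω → (α × β) × γ := fun ω => ((X ω, Y ω), Z ω)
  set g : (α × β) × γ → ℝ := fun v =>
    pr μ (fun ω => (X ω, Z ω)) (v.1.1, v.2) * pr μ (fun ω => (Y ω, Z ω)) (v.1.2, v.2) / pr μ Z v.2
    with hg_def
  have hterm : ∀ ω, μ ω - μ ω * (g (V ω) / pr μ V (V ω)) ≤ μ ω *
      (Real.log (pr μ V (V ω)) + Real.log (pr μ Z (Z ω))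
        - Real.log (pr μ (fun ω => (X ω, Z ω)) (X ω, Z ω))
        - Real.log (pr μ (fun ω => (Y ω, Z ω)) (Y ω, Z ω))) := by
    intro ω
    rcases (h0 ω).eq_or_lt with hω | hω
    · simp [← hω]
    have pV := pr_apply_pos h0 V hω
    have pZ := pr_apply_pos h0 Z hω
    calc _ = μ ω * (1 - pr μ (fun ω => (X ω, Z ω)) (X ω, Z ω)
            * pr μ (fun ω => (Y ω, Z ω)) (Y ω, Z ω) / (pr μ V (V ω) * pr μ Z (Z ω))) := by
          rw [hg_def]
          dsimp only [V]
          field_simp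
      _ ≤ _ := mul_le_mul_of_nonneg_left (one_sub_mul_div_mul_le_log pV pZ
          (pr_apply_pos h0 (fun ω => (X ω, Z ω)) hω) (pr_apply_pos h0 (fun ω => (Y ω, Z ω)) hω))
          (h0 ω)
  have hsum : ∑ ω, μ ω * (g (V ω) / pr μ V (V ω)) ≤ ∑ ω, μ ω :=
    (sum_mul_div_pr_le V (g := g) fun _ =>
      div_nonneg (mul_nonneg (pr_nonneg h0 _ _) (pr_nonneg h0 _ _)) (pr_nonneg h0 _ _)).trans
      (sum_pr_mul_pr_div_pr X Y Z).le
  rw [condMI_eq_sum_log]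
  calc (0 : ℝ) ≤ ∑ ω, (μ ω - μ ω * (g (V ω) / pr μ V (V ω))) := by
        rw [sum_sub_distrib]
        linarith
    _ ≤ _ := sum_le_sum fun ω _ => hterm ω

theorem condMI_add_condMI_pair_eq (X : Ω → α) (U : Ω → δ) (Y : Ω → β) (W : Ω → γ) :
    condMI μ X Y W + condMI μ U Y (fun ω => (X ω, W ω))
      = condMI μ U Y W + condMI μ X Y (fun ω => (U ω, W ω)) := by
  rw [← condMI_pair_left, ← condMI_pair_left]
  exact condMI_congr (fun ω ω' => by simp only [Prod.mk.injEq]; tauto)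
    (fun _ _ => Iff.rfl) (fun _ _ => Iff.rfl)

theorem condMI_le_of_condMI_eq_zero (h0 : ∀ ω, 0 ≤ μ ω) {U : Ω → δ} (X : Ω → α) {Y : Ω → β}
    {W : Ω → γ} (h : condMI μ U Y (fun ω => (X ω, W ω)) = 0) :
    condMI μ U Y W ≤ condMI μ X Y W := by
  have := condMI_add_condMI_pair_eq (μ := μ) X U Y W
  have := condMI_nonneg h0 X Y fun ω => (U ω, W ω)
  linarith

theorem condMI_pair_le_of_condMI_eq_zero (h0 : ∀ ω, 0 ≤ μ ω) {U : Ω → δ} {X : Ω → α}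
    {Y : Ω → β} {W : Ω → γ} (h : condMI μ U Y (fun ω => (X ω, W ω)) = 0) :
    condMI μ X Y (fun ω => (U ω, W ω)) ≤ condMI μ X Y W := by
  have := condMI_add_condMI_pair_eq (μ := μ) X U Y W
  have := condMI_nonneg h0 U Y W
  linarith

theorem condMI_le_pair_of_condMI_eq_zero (h0 : ∀ ω, 0 ≤ μ ω) {U : Ω → δ} (X : Ω → α)
    {Y : Ω → β} {W : Ω → γ} (h : condMI μ U Y W = 0) :
    condMI μ X Y W ≤ condMI μ X Y (fun ω => (U ω, W ω)) := by
  have := condMI_add_condMI_pair_eq (μ := μ) X U Y W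
  have := condMI_nonneg h0 U Y fun ω => (X ω, W ω)
  linarith

theorem condMI_eq_zero_of_condIndep (h0 : ∀ ω, 0 ≤ μ ω) {X : Ω → α} {Y : Ω → β} {Z : Ω → γ}
    (h : CondIndep μ X Y Z) : condMI μ X Y Z = 0 := by
  rw [condMI_eq_sum_log]
  refine sum_eq_zero fun ω _ => ?_
  rcases (h0 ω).eq_or_lt with hω | hω
  · simp [← hω]
  rw [← Real.log_mul (pr_apply_pos h0 (fun ω => ((X ω, Y ω), Z ω)) hω).ne'
      (pr_apply_pos h0 Z hω).ne', h ω,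
    Real.log_mul (pr_apply_pos h0 (fun ω => (X ω, Z ω)) hω).ne'
      (pr_apply_pos h0 (fun ω => (Y ω, Z ω)) hω).ne']
  ring

end InformationMeasures

section TimeSharing

variable {Ω α β γ : Type*} {μ : Ω → ℝ} {T : ℕ}

/-- The law of `(ω, Z)` with `Z` uniform on `Fin T` and independent of `ω ∼ μ`. -/
noncomputable def timeShare (T : ℕ) (μ : Ω → ℝ) : Ω × Fin T → ℝ := fun p => μ p.1 / T

theorem timeShare_nonneg (h0 : ∀ ω, 0 ≤ μ ω) (p : Ω × Fin T) : 0 ≤ timeShare T μ p :=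
  div_nonneg (h0 p.1) T.cast_nonneg

variable [Fintype Ω] [DecidableEq α] [DecidableEq β] [DecidableEq γ]

theorem sum_timeShare (hT : 0 < T) : ∑ p, timeShare T μ p = ∑ ω, μ ω := by
  have hT' : (T : ℝ) ≠ 0 := Nat.cast_ne_zero.2 hT.ne'
  simp [timeShare, Fintype.sum_prod_type, mul_div_cancel₀ _ hT']

theorem pr_timeShare (V : Fin T → Ω → α) (v : α) :
    pr (timeShare T μ) (fun p => V p.2 p.1) v = (∑ t, pr μ (V t) v) / T := by
  simp only [pr, timeShare, Fintype.sum_prod_type, sum_div, ite_div, zero_div]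
  exact sum_comm

theorem pr_timeShare_index (V : Fin T → Ω → α) (t : Fin T) (v : α) :
    pr (timeShare T μ) (fun p => (p.2, V p.2 p.1)) (t, v) = pr μ (V t) v / T := by
  rw [pr_timeShare (V := fun s ω => (s, V s ω)), sum_eq_single t]
  · exact congrArg (· / (T : ℝ)) (pr_congr fun ω => by simp)
  · intro s _ hs
    exact sum_eq_zero fun ω _ => if_neg fun h => hs (congrArg Prod.fst h)
  · simp

theorem Hent_timeShare [Fintype α] (hT : 0 < T) (V : Fin T → Ω → α) :
    Hent (timeShare T μ) (fun p => (p.2, V p.2 p.1))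
      = (∑ t, Hent μ (V t)) / T + (∑ ω, μ ω) * Real.log T := by
  have hT' : (T : ℝ) ≠ 0 := Nat.cast_ne_zero.2 hT.ne'
  have hterm : ∀ x : ℝ, x / T * Real.log (x / T) = x * Real.log x / T - x * Real.log T / T := by
    intro x
    rcases eq_or_ne x 0 with rfl | hx
    · simp
    rw [Real.log_div hx hT']
    ring
  simp only [Hent, Fintype.sum_prod_type, pr_timeShare_index, hterm, sum_sub_distrib,
    ← sum_div, ← sum_mul, sum_pr, sum_const, card_univ, Fintype.card_fin, nsmul_eq_mul,
    sum_neg_distrib, neg_div]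
  field_simp
  ring

theorem condMI_timeShare [Fintype α] [Fintype β] [Fintype γ] (hT : 0 < T) (u : Fin T → Ω → α)
    (v : Fin T → Ω → β) (w : Fin T → Ω → γ) :
    condMI (timeShare T μ) (fun p => u p.2 p.1) (fun p => v p.2 p.1) (fun p => (p.2, w p.2 p.1))
      = (∑ t, condMI μ (u t) (v t) (w t)) / T := by
  rw [condMI_eq_Hent,
    Hent_congr (X := fun p : Ω × Fin T => (u p.2 p.1, p.2, w p.2 p.1))
      (X' := fun p => (p.2, u p.2 p.1, w p.2 p.1)) fun _ _ => by
        simp only [Prod.mk.injEq]; tauto,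
    Hent_congr (X := fun p : Ω × Fin T => (v p.2 p.1, p.2, w p.2 p.1))
      (X' := fun p => (p.2, v p.2 p.1, w p.2 p.1)) fun _ _ => by
        simp only [Prod.mk.injEq]; tauto,
    Hent_congr (X := fun p : Ω × Fin T => ((u p.2 p.1, v p.2 p.1), p.2, w p.2 p.1))
      (X' := fun p => (p.2, (u p.2 p.1, v p.2 p.1), w p.2 p.1)) fun _ _ => by
        simp only [Prod.mk.injEq]; tauto]
  simp only [Hent_timeShare hT (V := fun t ω => (u t ω, w t ω)),
    Hent_timeShare hT (V := fun t ω => (v t ω, w t ω)),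
    Hent_timeShare hT (V := fun t ω => ((u t ω, v t ω), w t ω)), Hent_timeShare hT w,
    condMI_eq_Hent, sum_add_distrib, sum_sub_distrib]
  ring

theorem condIndep_timeShare (v : Fin T → Ω → β) (w : Fin T → Ω → γ) (K : β → γ → ℝ)
    (hK : ∀ t b c, pr μ (fun ω => (v t ω, w t ω)) (b, c) = K b c * pr μ (w t) c) :
    CondIndep (timeShare T μ) (fun p => p.2) (fun p => v p.2 p.1) (fun p => w p.2 p.1) := by
  rintro ⟨ω, t⟩
  dsimp only
  rw [pr_congr (X' := fun p : Ω × Fin T => (p.2, v p.2 p.1, w p.2 p.1)) (x' := (t, v t ω, w t ω))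
      fun _ => by simp only [Prod.mk.injEq, and_assoc],
    pr_timeShare_index (V := fun s ω => (v s ω, w s ω)), pr_timeShare_index w,
    pr_timeShare w, pr_timeShare (V := fun s ω => (v s ω, w s ω))]
  simp only [hK, ← mul_sum]
  ring

end TimeSharing

theorem sum_ite_sum_update {ι B : Type*} [Fintype ι] [DecidableEq ι] [Fintype B] [DecidableEq B]
    (k : ι) (c : B) (F : (ι → B) → ℝ) :
    ∑ y, (if y k = c then ∑ b, F (Function.update y k b) else 0) = ∑ y, F y := by
  rw [← sum_filter, sum_comm, ← sum_fiberwise univ (fun y => y k) F]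
  refine sum_congr rfl fun b _ => ?_
  refine sum_nbij' (Function.update · k b) (Function.update · k c) (by simp) (by simp)
    (fun y hy => ?_) (fun y hy => ?_) (fun _ _ => rfl)
  · simp [← (mem_filter.1 hy).2]
  · simp [← (mem_filter.1 hy).2]

section CausalChain

variable {T : ℕ} {B : Type*} {G : Fin T → (Fin T → B) → ℝ}

def IsCausal (G : Fin T → (Fin T → B) → ℝ) : Prop :=
  ∀ (s k : Fin T) y b, s < k → G s (Function.update y k b) = G s y

/-- Interpolates between the point mass at `y₀` (`k = 0`) and the full product `∏ s, G s y`
(`k = T`): the first `k` stages, with the later coordinates frozen at `y₀`. -/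
noncomputable def pinnedWeight [DecidableEq B] (G : Fin T → (Fin T → B) → ℝ) (y₀ : Fin T → B)
    (k : ℕ) (y : Fin T → B) : ℝ :=
  if ∀ s : Fin T, k ≤ (s : ℕ) → y s = y₀ s then
    ∏ s ∈ univ.filter fun s : Fin T => (s : ℕ) < k, G s y
  else 0

theorem pinnedWeight_succ_update [DecidableEq B]
    (hG : IsCausal G)
    {y₀ y : Fin T → B} (k : Fin T) (hy : y k = y₀ k) (b : B) :
    pinnedWeight G y₀ (k + 1) (Function.update y k b)
      = pinnedWeight G y₀ k y * G k (Function.update y k b) := by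
  have hcond : (∀ s : Fin T, (k : ℕ) + 1 ≤ s → Function.update y k b s = y₀ s)
      ↔ ∀ s : Fin T, (k : ℕ) ≤ s → y s = y₀ s := by
    refine ⟨fun h s hs => ?_, fun h s hs => ?_⟩
    · rcases hs.eq_or_lt with hs | hs
      · rwa [← Fin.ext hs]
      · simpa [Function.update_of_ne (Fin.ne_of_val_ne hs.ne')] using h s hs
    · rw [Function.update_of_ne (Fin.ne_of_val_ne (by omega))]
      exact h s (by omega)
  have hfilter : univ.filter (fun s : Fin T => (s : ℕ) < k + 1)
      = insert k (univ.filter fun s : Fin T => (s : ℕ) < k) := by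
    ext s
    simp [Fin.ext_iff]
    omega
  unfold pinnedWeight
  rw [if_congr hcond rfl rfl, hfilter, prod_insert (by simp)]
  split_ifs
  · rw [mul_comm, prod_congr rfl fun s hs => hG s k y b (by simpa using hs)]
  · rw [zero_mul]

theorem sum_pinnedWeight_succ [Fintype B] [DecidableEq B]
    (hG : IsCausal G)
    (y₀ : Fin T → B) (k : Fin T) (ψ : (Fin T → B) → ℝ) :
    ∑ y, pinnedWeight G y₀ (k + 1) y * ψ y
      = ∑ y, pinnedWeight G y₀ k y *
          ∑ b, G k (Function.update y k b) * ψ (Function.update y k b) := by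
  rw [← sum_ite_sum_update k (y₀ k)]
  refine sum_congr rfl fun y _ => ?_
  split_ifs with hy
  · rw [mul_sum]
    exact sum_congr rfl fun b _ => by rw [pinnedWeight_succ_update hG k hy, mul_assoc]
  · rw [show pinnedWeight G y₀ k y = 0 from if_neg fun h => hy (h k le_rfl), zero_mul]

theorem sum_prod_mul_eq_sum_pinnedWeight [Fintype B] [DecidableEq B]
    (hG : IsCausal G)
    (hnorm : ∀ k y, ∑ b, G k (Function.update y k b) = 1) (y₀ : Fin T → B) {k : ℕ} (hk : k ≤ T)
    (φ : (Fin T → B) → ℝ) (hφ : ∀ (s : Fin T) y b, k ≤ (s : ℕ) → φ (Function.update y s b) = φ y) :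
    ∑ y, (∏ s, G s y) * φ y = ∑ y, pinnedWeight G y₀ k y * φ y := by
  revert hφ
  induction hk using Nat.decreasingInduction with
  | self =>
    intro _
    refine sum_congr rfl fun y _ => ?_
    simp [pinnedWeight]
  | of_succ k hk ih =>
    intro hφ
    rw [ih fun s y b hs => hφ s y b (by omega), sum_pinnedWeight_succ hG y₀ ⟨k, hk⟩]
    refine sum_congr rfl fun y _ => ?_
    simp only [hφ ⟨k, hk⟩ y _ le_rfl, ← sum_mul, hnorm, one_mul]

theorem sum_prod_eq_one [Fintype B] [DecidableEq B]
    (hG : IsCausal G)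
    (hnorm : ∀ k y, ∑ b, G k (Function.update y k b) = 1) (y₀ : Fin T → B) :
    ∑ y, ∏ s, G s y = 1 := by
  simpa [pinnedWeight, ← funext_iff] using
    sum_prod_mul_eq_sum_pinnedWeight hG hnorm y₀ (Nat.zero_le T) (fun _ => 1) (by simp)

theorem sum_prod_mul_ite [Fintype B] [DecidableEq B]
    (hG : IsCausal G)
    (hnorm : ∀ k y, ∑ b, G k (Function.update y k b) = 1) (t : Fin T) (φ : (Fin T → B) → ℝ)
    (hφ : ∀ (s : Fin T) y b, t ≤ s → φ (Function.update y s b) = φ y) (b : B) :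
    ∑ y, (∏ s, G s y) * (if y t = b then φ y else 0)
      = ∑ y, (∏ s, G s y) * (G t (Function.update y t b) * φ y) := by
  rcases isEmpty_or_nonempty (Fin T → B) with hB | hB
  · simp [univ_eq_empty]
  obtain ⟨y₀⟩ := hB
  rw [sum_prod_mul_eq_sum_pinnedWeight hG hnorm y₀ (k := t + 1) t.isLt _ fun s y c hs => by
      rw [Function.update_of_ne (Fin.ne_of_val_ne (by omega)).symm,
        hφ s y c (Fin.le_iff_val_le_val.2 (by omega))],
    sum_pinnedWeight_succ hG y₀ t,
    sum_prod_mul_eq_sum_pinnedWeight hG hnorm y₀ (k := t) t.isLt.le _ fun s y c hs => by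
      rcases (Fin.le_iff_val_le_val.2 hs).eq_or_lt with rfl | hts
      · rw [Function.update_idem, hφ _ y c le_rfl]
      · rw [Function.update_comm hts.ne', hG t s _ c hts, hφ s y c hts.le]]
  refine sum_congr rfl fun y _ => ?_
  simp [hφ t y _ le_rfl]

end CausalChain

section PastFuture

variable {T : ℕ} {C : Type*} {x x' : Fin T → C}

def past (k : ℕ) (x : Fin T → C) : Fin T → Option C :=
  fun s => if (s : ℕ) < k then some (x s) else none

def future (k : ℕ) (x : Fin T → C) : Fin T → Option C :=
  fun s => if k ≤ (s : ℕ) then some (x s) else none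

theorem past_eq_past_iff {k : ℕ} :
    past k x = past k x' ↔ ∀ s : Fin T, (s : ℕ) < k → x s = x' s := by
  simp only [funext_iff, past]
  refine forall_congr' fun s => ?_
  by_cases h : (s : ℕ) < k <;> simp [h]

theorem future_eq_future_iff {k : ℕ} :
    future k x = future k x' ↔ ∀ s : Fin T, k ≤ (s : ℕ) → x s = x' s := by
  simp only [funext_iff, future]
  refine forall_congr' fun s => ?_
  by_cases h : k ≤ (s : ℕ) <;> simp [h]

theorem past_succ_eq_past_succ_iff (k : Fin T) :
    past (k + 1) x = past (k + 1) x' ↔ x k = x' k ∧ past k x = past k x' := by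
  simp only [past_eq_past_iff]
  refine ⟨fun h => ⟨h k (by omega), fun s hs => h s (by omega)⟩, fun h s hs => ?_⟩
  rcases (Nat.lt_succ_iff.1 hs).eq_or_lt with hs | hs
  · rw [Fin.ext hs]
    exact h.1
  · exact h.2 s hs

theorem future_eq_future_iff_succ (k : Fin T) :
    future k x = future k x' ↔ x k = x' k ∧ future (k + 1) x = future (k + 1) x' := by
  simp only [future_eq_future_iff]
  refine ⟨fun h => ⟨h k le_rfl, fun s hs => h s (by omega)⟩, fun h s hs => ?_⟩
  rcases hs.eq_or_lt with hs | hs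
  · rw [← Fin.ext hs]
    exact h.1
  · exact h.2 s hs

theorem past_update {t s : Fin T} (h : t ≤ s) (b : C) : past t (Function.update x s b) = past t x :=
  past_eq_past_iff.2 fun _ hr => Function.update_of_ne (Fin.ne_of_val_ne (by omega)) _ _

end PastFuture

theorem sum_condMI_past_eq_sum_condMI_future {Ω α β : Type*} [Fintype Ω] [Fintype α]
    [DecidableEq α] [Fintype β] [DecidableEq β] {T : ℕ} (μ : Ω → ℝ) (X : Ω → Fin T → α)
    (Y : Ω → Fin T → β) :
    ∑ t : Fin T, condMI μ (fun ω => X ω t) (fun ω => past t (Y ω)) (fun ω => past t (X ω))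
      = ∑ t : Fin T, condMI μ (fun ω => future (t + 1) (X ω)) (fun ω => Y ω t)
          (fun ω => (past t (Y ω), past (t + 1) (X ω))) := by
  let a : ℕ → ℝ := fun k =>
    condMI μ (fun ω => future k (X ω)) (fun ω => past k (Y ω)) (fun ω => past k (X ω))
  have hstep : ∀ t : Fin T,
      condMI μ (fun ω => X ω t) (fun ω => past t (Y ω)) (fun ω => past t (X ω)) + a (t + 1)
        = a t + condMI μ (fun ω => future (t + 1) (X ω)) (fun ω => Y ω t)
          (fun ω => (past t (Y ω), past (t + 1) (X ω))) := by
    intro t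
    have hXt : a t = condMI μ (fun ω => X ω t) (fun ω => past t (Y ω)) (fun ω => past t (X ω))
        + condMI μ (fun ω => future (t + 1) (X ω)) (fun ω => past t (Y ω))
          (fun ω => past (t + 1) (X ω)) := by
      calc a t = condMI μ (fun ω => (X ω t, future (t + 1) (X ω))) (fun ω => past t (Y ω))
            (fun ω => past t (X ω)) :=
            condMI_congr (fun ω ω' => by rw [future_eq_future_iff_succ, Prod.mk.injEq])
              (fun _ _ => Iff.rfl) (fun _ _ => Iff.rfl)
        _ = _ := condMI_pair_left _ _ _ _
        _ = _ := congrArg _ (condMI_congr (fun _ _ => Iff.rfl) (fun _ _ => Iff.rfl)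
            fun ω ω' => by rw [past_succ_eq_past_succ_iff, Prod.mk.injEq])
    have hYt : a (t + 1) = condMI μ (fun ω => future (t + 1) (X ω)) (fun ω => past t (Y ω))
          (fun ω => past (t + 1) (X ω))
        + condMI μ (fun ω => future (t + 1) (X ω)) (fun ω => Y ω t)
          (fun ω => (past t (Y ω), past (t + 1) (X ω))) := by
      calc a (t + 1) = condMI μ (fun ω => future (t + 1) (X ω)) (fun ω => (past t (Y ω), Y ω t))
            (fun ω => past (t + 1) (X ω)) :=
            condMI_congr (fun _ _ => Iff.rfl)
              (fun ω ω' => by rw [past_succ_eq_past_succ_iff, Prod.mk.injEq, and_comm])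
              (fun _ _ => Iff.rfl)
        _ = _ := condMI_pair_right _ _ _ _
    rw [hXt, hYt]
    ring
  have ha0 : a 0 = 0 := by
    refine (condMI_comm _ _ _).trans (condMI_eq_zero_of_determined _ fun ω ω' _ => ?_)
    exact past_eq_past_iff.2 fun s hs => absurd hs (Nat.not_lt_zero _)
  have haT : a T = 0 := condMI_eq_zero_of_determined _ fun ω ω' _ =>
    future_eq_future_iff.2 fun s hs => absurd s.isLt (not_lt.2 hs)
  have htele : ∑ t : Fin T, (a t - a (t + 1)) = 0 := by
    rw [Fin.sum_univ_eq_sum_range (fun k => a k - a (k + 1)), sum_range_sub', ha0, haT, sub_zero]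
  rw [← sub_eq_zero, ← sum_sub_distrib, ← htele]
  exact sum_congr rfl fun t _ => by linarith [hstep t]

section ChannelModel

variable {A A1 A2 B : Type*} {T : ℕ}

/-- The probability that the channel outputs `b` at stage `t` along the history `ω`. -/
def obsWeight (Γ : B → A → A1 → A2 → ℝ) (σ : Fin T → (Fin T → A) → A1)
    (τ : (t : Fin T) → (Fin t.val → A) → (Fin t.val → B) → A2) (t : Fin T) (b : B)
    (ω : (Fin T → A) × (Fin T → B)) : ℝ :=
  Γ b (ω.1 t) (σ t ω.1) (τ t (fun s => ω.1 (preIdx t s)) (fun s => ω.2 (preIdx t s)))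

def DeterminedBefore {κ : Type*} (t : Fin T) (V : (Fin T → A) × (Fin T → B) → κ) : Prop :=
  ∀ x y (s : Fin T) b, t ≤ s → V (x, Function.update y s b) = V (x, y)

theorem update_comp_preIdx {t s : Fin T} (h : t ≤ s) (y : Fin T → B) (b : B) :
    (fun r => Function.update y s b (preIdx t r)) = fun r => y (preIdx t r) :=
  funext fun r => Function.update_of_ne
    (Fin.ne_of_val_ne (by simp only [preIdx, Fin.val_castLE]; have := r.isLt; omega)) _ _

theorem comp_preIdx_eq_of_past_eq {C : Type*} {t : Fin T} {x x' : Fin T → C}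
    (h : past t x = past t x') : (fun s => x (preIdx t s)) = fun s => x' (preIdx t s) :=
  funext fun s => past_eq_past_iff.1 h (preIdx t s) s.isLt

variable {Γ : B → A → A1 → A2 → ℝ} {σ : Fin T → (Fin T → A) → A1}
  {τ : (t : Fin T) → (Fin t.val → A) → (Fin t.val → B) → A2}

theorem determinedBefore_obsWeight (t : Fin T) (b : B) :
    DeterminedBefore t (obsWeight Γ σ τ t b) := fun x y s c h => by
  simp only [obsWeight, update_comp_preIdx h]

theorem isCausal_obsWeight (x : Fin T → A) :
    IsCausal fun t y => obsWeight Γ σ τ t (y t) (x, y) := fun s k y b h => by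
  dsimp only
  rw [Function.update_of_ne h.ne]
  exact determinedBefore_obsWeight s (y s) x y k b h.le

variable [Fintype A] [Fintype B]

structure IsChannelLaw (ρ0 : A → ℝ) (Γ : B → A → A1 → A2 → ℝ) (σ : Fin T → (Fin T → A) → A1)
    (τ : (t : Fin T) → (Fin t.val → A) → (Fin t.val → B) → A2)
    (μ : (Fin T → A) × (Fin T → B) → ℝ) : Prop where
  ρ0_nonneg : ∀ a, 0 ≤ ρ0 a
  sum_ρ0 : ∑ a, ρ0 a = 1
  Γ_nonneg : ∀ b a a1 a2, 0 ≤ Γ b a a1 a2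
  sum_Γ : ∀ a a1 a2, ∑ b, Γ b a a1 a2 = 1
  eq_prod : ∀ x y, μ (x, y) = (∏ t, ρ0 (x t)) * ∏ t, obsWeight Γ σ τ t (y t) (x, y)

namespace IsChannelLaw

variable {ρ0 : A → ℝ} {μ : (Fin T → A) × (Fin T → B) → ℝ}

theorem nonneg (h : IsChannelLaw ρ0 Γ σ τ μ) (ω : (Fin T → A) × (Fin T → B)) : 0 ≤ μ ω := by
  rw [← Prod.mk.eta (p := ω), h.eq_prod]
  exact mul_nonneg (prod_nonneg fun _ _ => h.ρ0_nonneg _)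
    (prod_nonneg fun _ _ => h.Γ_nonneg _ _ _ _)

theorem sum_obsWeight_update (h : IsChannelLaw ρ0 Γ σ τ μ) (x : Fin T → A) (k : Fin T)
    (y : Fin T → B) :
    ∑ b, obsWeight Γ σ τ k (Function.update y k b k) (x, Function.update y k b) = 1 := by
  simp only [Function.update_self, determinedBefore_obsWeight k _ x y k _ le_rfl]
  exact h.sum_Γ _ _ _

theorem nonempty_obs (h : IsChannelLaw ρ0 Γ σ τ μ) : Nonempty (Fin T → B) := by
  rcases Nat.eq_zero_or_pos T with rfl | hT
  · exact ⟨Fin.elim0⟩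
  obtain ⟨a⟩ : Nonempty A := by
    by_contra hA
    simpa [not_nonempty_iff.1 hA] using h.sum_ρ0
  let t₀ : Fin T := ⟨0, hT⟩
  have := h.sum_Γ a (σ t₀ fun _ => a) (τ t₀ (fun _ => a) fun s => absurd s.isLt (Nat.not_lt_zero _))
  obtain ⟨b, -, -⟩ := exists_ne_zero_of_sum_ne_zero (this ▸ one_ne_zero)
  exact ⟨fun _ => b⟩

variable [DecidableEq B]

theorem sum_obs (h : IsChannelLaw ρ0 Γ σ τ μ) (x : Fin T → A) :
    ∑ y, μ (x, y) = ∏ t, ρ0 (x t) := by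
  obtain ⟨y₀⟩ := h.nonempty_obs
  simp only [h.eq_prod, ← mul_sum]
  rw [sum_prod_eq_one (G := fun t y => obsWeight Γ σ τ t (y t) (x, y))
    (isCausal_obsWeight x) (h.sum_obsWeight_update x) y₀, mul_one]

theorem sum_mul_states (h : IsChannelLaw ρ0 Γ σ τ μ) (φ : (Fin T → A) → ℝ) :
    ∑ ω, μ ω * φ ω.1 = ∑ x, (∏ t, ρ0 (x t)) * φ x := by
  simp only [Fintype.sum_prod_type, ← sum_mul, h.sum_obs]

theorem pr_eq_prod_of_iff [DecidableEq A] (h : IsChannelLaw ρ0 Γ σ τ μ) {κ : Type*} [DecidableEq κ]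
    {V : (Fin T → A) × (Fin T → B) → κ} {v : κ} (S : Finset (Fin T)) (x₀ : Fin T → A)
    (hV : ∀ ω, V ω = v ↔ ∀ s ∈ S, ω.1 s = x₀ s) :
    pr μ V v = ∏ s ∈ S, ρ0 (x₀ s) := by
  have hbox : univ.filter (fun x : Fin T → A => ∀ s ∈ S, x s = x₀ s)
      = Fintype.piFinset fun s => if s ∈ S then {x₀ s} else univ := by
    ext x
    simp only [mem_filter, mem_univ, true_and, Fintype.mem_piFinset]
    refine forall_congr' fun s => ?_
    split_ifs with hs <;> simp [hs]
  calc pr μ V v = ∑ ω, μ ω * (if ∀ s ∈ S, ω.1 s = x₀ s then 1 else 0) := by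
        simp only [pr, hV, mul_ite, mul_one, mul_zero]
    _ = ∑ x ∈ Fintype.piFinset fun s => if s ∈ S then {x₀ s} else univ, ∏ t, ρ0 (x t) := by
        rw [h.sum_mul_states fun x => if ∀ s ∈ S, x s = x₀ s then 1 else 0, ← hbox, sum_filter]
        simp only [mul_ite, mul_one, mul_zero]
    _ = ∏ s, if s ∈ S then ρ0 (x₀ s) else 1 := by
        rw [← prod_univ_sum]
        refine prod_congr rfl fun s _ => ?_
        split_ifs <;> simp [h.sum_ρ0]
    _ = ∏ s ∈ S, ρ0 (x₀ s) := by rw [prod_ite_mem, univ_inter]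

theorem sum_mul_ite_obs (h : IsChannelLaw ρ0 Γ σ τ μ) (t : Fin T)
    {F : (Fin T → A) × (Fin T → B) → ℝ} (hF : DeterminedBefore t F) (b : B) :
    ∑ ω, μ ω * (if ω.2 t = b then F ω else 0) = ∑ ω, μ ω * (obsWeight Γ σ τ t b ω * F ω) := by
  simp only [Fintype.sum_prod_type, h.eq_prod, mul_assoc, ← mul_sum]
  refine sum_congr rfl fun x _ => congrArg _ ?_
  rw [sum_prod_mul_ite (G := fun t y => obsWeight Γ σ τ t (y t) (x, y))
    (isCausal_obsWeight x) (h.sum_obsWeight_update x) t (fun y => F (x, y))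
    (fun s y c hs => hF x y s c hs) b]
  simp only [Function.update_self, determinedBefore_obsWeight t b x _ t b le_rfl]

theorem pr_obs_pair_eq_mul (h : IsChannelLaw ρ0 Γ σ τ μ) (t : Fin T) {κ : Type*} [DecidableEq κ]
    {W : (Fin T → A) × (Fin T → B) → κ} (hW : DeterminedBefore t W) (b : B) (c : κ) (K : ℝ)
    (hK : ∀ ω, W ω = c → obsWeight Γ σ τ t b ω = K) :
    pr μ (fun ω => (ω.2 t, W ω)) (b, c) = K * pr μ W c := by
  calc pr μ (fun ω => (ω.2 t, W ω)) (b, c)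
        = ∑ ω, μ ω * (if ω.2 t = b then (if W ω = c then 1 else 0) else 0) := by
          simp only [pr, Prod.mk.injEq, ite_and, mul_ite, mul_one, mul_zero]
    _ = ∑ ω, μ ω * (obsWeight Γ σ τ t b ω * if W ω = c then 1 else 0) :=
          h.sum_mul_ite_obs t (fun x y s b hs => by simp only [hW x y s b hs]) b
    _ = K * pr μ W c := by
          rw [pr, mul_sum]
          refine sum_congr rfl fun ω _ => ?_
          split_ifs with hω
          · rw [hK ω hω]
            ring
          · simp

theorem condIndep_obs (h : IsChannelLaw ρ0 Γ σ τ μ) (t : Fin T) {κ₁ κ₂ : Type*} [DecidableEq κ₁]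
    [DecidableEq κ₂] {U : (Fin T → A) × (Fin T → B) → κ₁} {W : (Fin T → A) × (Fin T → B) → κ₂}
    (hU : DeterminedBefore t U) (hW : DeterminedBefore t W)
    (hWobs : ∀ ω ω', W ω = W ω' → ∀ b, obsWeight Γ σ τ t b ω = obsWeight Γ σ τ t b ω') :
    CondIndep μ U (fun ω => ω.2 t) W := by
  intro ω
  dsimp only
  rw [pr_congr (X := fun ω => ((U ω, ω.2 t), W ω)) (X' := fun ω => (ω.2 t, U ω, W ω))
      (x' := (ω.2 t, U ω, W ω)) fun _ => by simp only [Prod.mk.injEq]; tauto,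
    h.pr_obs_pair_eq_mul t (fun x y s b hs => by simp only [hU x y s b hs, hW x y s b hs]) _ _ _
      fun ω' hω' => hWobs ω' ω (congrArg Prod.snd hω') _,
    h.pr_obs_pair_eq_mul t hW _ _ _ fun ω' hω' => hWobs ω' ω hω' _]
  ring

theorem condIndep_state_past [DecidableEq A] (h : IsChannelLaw ρ0 Γ σ τ μ) (t : Fin T) :
    CondIndep μ (fun ω => ω.1 t) (fun ω => past t ω.1) (fun _ => ()) := by
  intro ω
  have hpast : t ∉ univ.filter fun s : Fin T => (s : ℕ) < t := by simp
  rw [h.pr_eq_prod_of_iff (insert t (univ.filter fun s : Fin T => (s : ℕ) < t)) ω.1 fun ω' => by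
      simp [past_eq_past_iff],
    h.pr_eq_prod_of_iff ∅ ω.1 fun ω' => by simp,
    h.pr_eq_prod_of_iff {t} ω.1 fun ω' => by simp,
    h.pr_eq_prod_of_iff (univ.filter fun s : Fin T => (s : ℕ) < t) ω.1 fun ω' => by
      simp [past_eq_past_iff],
    prod_insert hpast]
  simp

theorem sum_eq_one (h : IsChannelLaw ρ0 Γ σ τ μ) : ∑ ω, μ ω = 1 :=
  calc ∑ ω, μ ω = ∑ x : Fin T → A, ∏ t, ρ0 (x t) := by simpa using h.sum_mul_states fun _ => 1
    _ = ∏ _t : Fin T, ∑ a, ρ0 a := (Fintype.prod_sum fun _ a => ρ0 a).symm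
    _ = 1 := by simp [h.sum_ρ0]

theorem condMI_past_state_eq [DecidableEq A] (h : IsChannelLaw ρ0 Γ σ τ μ) (t : Fin T) :
    condMI μ (fun ω => (past t ω.1, past t ω.2)) (fun ω => ω.1 t) (fun _ => ())
      = condMI μ (fun ω => ω.1 t) (fun ω => past t ω.2) (fun ω => past t ω.1) := by
  rw [condMI_comm, condMI_pair_right,
    condMI_eq_zero_of_condIndep h.nonneg (h.condIndep_state_past t), zero_add]
  exact condMI_congr (fun _ _ => Iff.rfl) (fun _ _ => Iff.rfl) fun _ _ => by simp

theorem condMI_future_obs_le [DecidableEq A] [Fintype A1] [DecidableEq A1] [Fintype A2]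
    [DecidableEq A2] (h : IsChannelLaw ρ0 Γ σ τ μ) (t : Fin T) :
    condMI μ (fun ω => future (t + 1) ω.1) (fun ω => ω.2 t)
        (fun ω => (past t ω.2, past (t + 1) ω.1))
      ≤ condMI μ (fun ω => σ t ω.1) (fun ω => ω.2 t)
          (fun ω => (ω.1 t, τ t (fun s => ω.1 (preIdx t s)) (fun s => ω.2 (preIdx t s)))) := by
  set P : (Fin T → A) × (Fin T → B) → _ := fun ω => (past t ω.2, past (t + 1) ω.1)
  set W : (Fin T → A) × (Fin T → B) → A × A2 :=
    fun ω => (ω.1 t, τ t (fun s => ω.1 (preIdx t s)) (fun s => ω.2 (preIdx t s)))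
  have hPW : ∀ ω ω', P ω = P ω' → W ω = W ω' := by
    intro ω ω' e
    simp only [P, Prod.mk.injEq, past_succ_eq_past_succ_iff] at e
    obtain ⟨hy, hxt, hx⟩ := e
    simp only [W, hxt, comp_preIdx_eq_of_past_eq hx, comp_preIdx_eq_of_past_eq hy]
  have hobs : ∀ ω ω', σ t ω.1 = σ t ω'.1 → W ω = W ω' → ∀ b,
      obsWeight Γ σ τ t b ω = obsWeight Γ σ τ t b ω' := by
    intro ω ω' e1 e2 b
    simp only [W, Prod.mk.injEq] at e2
    simp only [obsWeight, e1, e2]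
  have hP : DeterminedBefore t P := fun x y s b hs => by simp only [P, past_update hs]
  have hW : DeterminedBefore t W := fun x y s b hs => by simp only [W, update_comp_preIdx hs]
  have hσP : condMI μ (fun ω => future (t + 1) ω.1) (fun ω => ω.2 t)
      (fun ω => (σ t ω.1, P ω)) = 0 :=
    condMI_eq_zero_of_condIndep h.nonneg <| h.condIndep_obs t (fun _ _ _ _ _ => rfl)
      (fun x y s b hs => congrArg (Prod.mk (σ t x)) (hP x y s b hs))
      fun ω ω' (e : (σ t ω.1, P ω) = (σ t ω'.1, P ω')) =>
        hobs ω ω' (congrArg Prod.fst e) (hPW ω ω' (congrArg Prod.snd e))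
  have hσW : condMI μ P (fun ω => ω.2 t) (fun ω => (σ t ω.1, W ω)) = 0 :=
    condMI_eq_zero_of_condIndep h.nonneg <| h.condIndep_obs t hP
      (fun x y s b hs => congrArg (Prod.mk (σ t x)) (hW x y s b hs))
      fun ω ω' (e : (σ t ω.1, W ω) = (σ t ω'.1, W ω')) =>
        hobs ω ω' (congrArg Prod.fst e) (congrArg Prod.snd e)
  calc _ ≤ condMI μ (fun ω => σ t ω.1) (fun ω => ω.2 t) P :=
        condMI_le_of_condMI_eq_zero h.nonneg _ hσP
    _ = condMI μ (fun ω => σ t ω.1) (fun ω => ω.2 t) (fun ω => (P ω, W ω)) :=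
        condMI_congr (fun _ _ => Iff.rfl) (fun _ _ => Iff.rfl)
          fun ω ω' => ⟨fun e => Prod.ext e (hPW ω ω' e), congrArg Prod.fst⟩
    _ ≤ _ := condMI_pair_le_of_condMI_eq_zero h.nonneg hσW

theorem sum_condMI_past_state_le [DecidableEq A] [Fintype A1] [DecidableEq A1] [Fintype A2]
    [DecidableEq A2] (h : IsChannelLaw ρ0 Γ σ τ μ) :
    ∑ t : Fin T, condMI μ (fun ω => (past t ω.1, past t ω.2)) (fun ω => ω.1 t) (fun _ => ())
      ≤ ∑ t : Fin T, condMI μ (fun ω => σ t ω.1) (fun ω => ω.2 t)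
          (fun ω => (ω.1 t, τ t (fun s => ω.1 (preIdx t s)) (fun s => ω.2 (preIdx t s)))) := by
  simp only [h.condMI_past_state_eq]
  rw [sum_condMI_past_eq_sum_condMI_future μ (fun ω => ω.1) (fun ω => ω.2)]
  exact sum_le_sum fun t _ => h.condMI_future_obs_le t

theorem MI_timeShare_le [DecidableEq A] [Fintype A2] [DecidableEq A2]
    (h : IsChannelLaw ρ0 Γ σ τ μ) (hT : 0 < T) :
    MI (timeShare T μ) (fun p => p.1.1 p.2)
        (fun p => τ p.2 (fun s => p.1.1 (preIdx p.2 s)) (fun s => p.1.2 (preIdx p.2 s)))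
      ≤ (∑ t : Fin T, condMI μ (fun ω => (past t ω.1, past t ω.2)) (fun ω => ω.1 t) (fun _ => ()))
          / T := by
  have h0 := timeShare_nonneg (T := T) h.nonneg
  have hZ : condMI (timeShare T μ) (fun p => p.2) (fun p => p.1.1 p.2) (fun _ => ()) = 0 :=
    condMI_eq_zero_of_condIndep h0 <| condIndep_timeShare
      (fun t (ω : (Fin T → A) × (Fin T → B)) => ω.1 t) (fun _ _ => ())
      (fun a _ => ρ0 a) fun t a _ => by
        rw [h.pr_eq_prod_of_iff {t} (fun _ => a) fun _ => by simp,
          h.pr_eq_prod_of_iff ∅ (fun _ => a) fun _ => by simp]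
        simp
  have hpast : condMI (timeShare T μ)
      (fun p => τ p.2 (fun s => p.1.1 (preIdx p.2 s)) (fun s => p.1.2 (preIdx p.2 s)))
      (fun p => p.1.1 p.2) (fun p => ((past p.2 p.1.1, past p.2 p.1.2), p.2, ())) = 0 := by
    refine condMI_eq_zero_of_determined _ fun ⟨⟨x, y⟩, t⟩ ⟨⟨x', y'⟩, t'⟩ e => ?_
    simp only [Prod.mk.injEq] at e
    obtain ⟨⟨hx, hy⟩, rfl, -⟩ := e
    simp only [comp_preIdx_eq_of_past_eq hx, comp_preIdx_eq_of_past_eq hy]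
  calc _ = condMI (timeShare T μ)
        (fun p => τ p.2 (fun s => p.1.1 (preIdx p.2 s)) (fun s => p.1.2 (preIdx p.2 s)))
        (fun p => p.1.1 p.2) (fun _ => ()) := by
        rw [MI_eq_condMI_unit (by rw [sum_timeShare hT, h.sum_eq_one]), condMI_comm]
    _ ≤ condMI (timeShare T μ)
        (fun p => τ p.2 (fun s => p.1.1 (preIdx p.2 s)) (fun s => p.1.2 (preIdx p.2 s)))
        (fun p => p.1.1 p.2) (fun p => (p.2, ())) := condMI_le_pair_of_condMI_eq_zero h0 _ hZ
    _ ≤ condMI (timeShare T μ) (fun p => (past p.2 p.1.1, past p.2 p.1.2))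
        (fun p => p.1.1 p.2) (fun p => (p.2, ())) := condMI_le_of_condMI_eq_zero h0 _ hpast
    _ = _ := condMI_timeShare hT
        (fun t (ω : (Fin T → A) × (Fin T → B)) => (past t ω.1, past t ω.2)) (fun t ω => ω.1 t)
        fun _ _ => ()

theorem le_condMI_timeShare [DecidableEq A] [Fintype A1] [DecidableEq A1] [Fintype A2]
    [DecidableEq A2] (h : IsChannelLaw ρ0 Γ σ τ μ) (hT : 0 < T) :
    (∑ t : Fin T, condMI μ (fun ω => σ t ω.1) (fun ω => ω.2 t)
        (fun ω => (ω.1 t, τ t (fun s => ω.1 (preIdx t s)) (fun s => ω.2 (preIdx t s))))) / T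
      ≤ condMI (timeShare T μ) (fun p => σ p.2 p.1.1) (fun p => p.1.2 p.2)
          (fun p => (p.1.1 p.2,
            τ p.2 (fun s => p.1.1 (preIdx p.2 s)) (fun s => p.1.2 (preIdx p.2 s)))) := by
  have hZ : condMI (timeShare T μ) (fun p => p.2) (fun p => p.1.2 p.2)
      (fun p => (σ p.2 p.1.1, p.1.1 p.2,
        τ p.2 (fun s => p.1.1 (preIdx p.2 s)) (fun s => p.1.2 (preIdx p.2 s)))) = 0 :=
    condMI_eq_zero_of_condIndep (timeShare_nonneg h.nonneg) <| condIndep_timeShare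
      (fun t (ω : (Fin T → A) × (Fin T → B)) => ω.2 t)
      (fun t (ω : (Fin T → A) × (Fin T → B)) =>
        (σ t ω.1, ω.1 t, τ t (fun s => ω.1 (preIdx t s)) (fun s => ω.2 (preIdx t s))))
      (fun b c => Γ b c.2.1 c.1 c.2.2) fun t b c =>
        h.pr_obs_pair_eq_mul t (fun x y s b hs => by simp only [update_comp_preIdx hs]) b c _
          fun ω hω => by subst hω; rfl
  rw [← condMI_timeShare hT]
  exact condMI_pair_le_of_condMI_eq_zero (timeShare_nonneg h.nonneg) hZ

end IsChannelLaw

end ChannelModel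

/-- Core step of the converse of Theorem 1: with `Z` uniform on `{1,…,T}`
independent of everything, `X₀^T` i.i.d., `X₁ₜ = σₜ(X₀^T)`,
`X₂ₜ = τₜ(X₀^{t−1}, Y^{t−1})` and `Y` produced by the memoryless channel `Γ`,
one has `I(X₀ᴢ; X₂ᴢ) ≤ I(X₁ᴢ; Yᴢ | X₀ᴢ, X₂ᴢ)`. -/
theorem converse_information_constraint
    {A A1 A2 B : Type*} [Fintype A] [DecidableEq A] [Fintype A1] [DecidableEq A1]
    [Fintype A2] [DecidableEq A2] [Fintype B] [DecidableEq B]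
    {T : ℕ} (hT : 0 < T)
    (ρ0 : A → ℝ) (hρ0 : ∀ x, 0 ≤ ρ0 x) (hρ0s : ∑ x, ρ0 x = 1)
    (Γ : B → A → A1 → A2 → ℝ)
    (hΓ0 : ∀ y x0 x1 x2, 0 ≤ Γ y x0 x1 x2)
    (hΓs : ∀ x0 x1 x2, ∑ y, Γ y x0 x1 x2 = 1)
    -- strategies of Agent 1 and Agent 2
    (σ : Fin T → (Fin T → A) → A1)
    (τ : (t : Fin T) → (Fin t.val → A) → (Fin t.val → B) → A2)
    -- joint law of (X₀^T, Y^T): i.i.d. states and memoryless observation channel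
    (μ : (Fin T → A) × (Fin T → B) → ℝ)
    (hμ : ∀ x0 y, μ (x0, y) =
      (∏ t, ρ0 (x0 t)) *
        ∏ t, Γ (y t) (x0 t) (σ t x0)
          (τ t (fun s => x0 (preIdx t s)) (fun s => y (preIdx t s))))
    -- the randomized-stage space: `Z` uniform on `Fin T`, independent of the rest
    (μ' : ((Fin T → A) × (Fin T → B)) × Fin T → ℝ)
    (hμ' : ∀ ω t, μ' (ω, t) = μ ω / T) :
    MI μ' (fun p => p.1.1 p.2)
        (fun p => τ p.2 (fun s => p.1.1 (preIdx p.2 s)) (fun s => p.1.2 (preIdx p.2 s)))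
      ≤ condMI μ' (fun p => σ p.2 p.1.1) (fun p => p.1.2 p.2)
          (fun p => (p.1.1 p.2,
            τ p.2 (fun s => p.1.1 (preIdx p.2 s)) (fun s => p.1.2 (preIdx p.2 s)))) := by
  have h : IsChannelLaw ρ0 Γ σ τ μ := ⟨hρ0, hρ0s, hΓ0, hΓs, hμ⟩
  obtain rfl : μ' = timeShare T μ := funext fun p => hμ' p.1 p.2
  calc _ ≤ _ := h.MI_timeShare_le hT
    _ ≤ _ := div_le_div_of_nonneg_right h.sum_condMI_past_state_le T.cast_nonneg
    _ ≤ _ := h.le_condMI_timeShare hT
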